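/- Let n, k be positive integers with 2k ≤ n, and let g : {0,1}^n → ℝ satisfy ĝ(∅) = 1 and ĝ(S) = 0 for all S ⊆ {1,…,n} with 1 ≤ |S| ≤ k−1. Let A be the adjacency operator of the Hamming graph on {0,1}^n. Then ⟨Ag, g⟩ ≤ n + (n − 2k)·E[g²]. -/

import Mathlib

/-!
The characters `χ_S` are eigenfunctions of the self-adjoint operator `A` with eigenvalue
`n - 2|S|` (flipping coordinate `i` changes the sign of `χ_S` iff `i ∈ S`), so by Parseval
`⟨Ag, g⟩ = ∑_S (n - 2|S|) ĝ(S)²`. Every nonzero coefficient other than `ĝ(∅) = 1` has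
`|S| ≥ k`, hence weight at most `n - 2k`; so `⟨Ag, g⟩ ≤ 2k + (n - 2k) E[g²]`.
-/

/-- The adjacency operator of the Hamming graph on `{0,1}^n`. -/
def adjOp {n : ℕ} (f : (Fin n → Bool) → ℝ) (x : Fin n → Bool) : ℝ :=
  ∑ y ∈ Finset.univ.filter fun y => hammingDist x y = 1, f y

/-- The character `χ_S(x) = (−1)^{∑_{i ∈ S} x_i}` on `{0,1}^n`. -/
def chi {n : ℕ} (S : Finset (Fin n)) (x : Fin n → Bool) : ℝ :=
  ∏ i ∈ S, if x i then (-1 : ℝ) else 1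

/-- Fourier coefficient `f̂(S) = E_x[f(x) χ_S(x)]`, `x` uniform in `{0,1}^n`. -/
noncomputable def fourierHat {n : ℕ} (f : (Fin n → Bool) → ℝ) (S : Finset (Fin n)) : ℝ :=
  (∑ x, f x * chi S x) / 2 ^ n

/-- Inner product `⟨f, g⟩ = E_x[f(x)·g(x)]`, `x` uniform in `{0,1}^n`. -/
noncomputable def cubeInner {n : ℕ} (f g : (Fin n → Bool) → ℝ) : ℝ :=
  (∑ x, f x * g x) / 2 ^ n

open Finset

namespace BooleanCube

variable {n : ℕ}

lemma fourierHat_eq_cubeInner (f : (Fin n → Bool) → ℝ) (S : Finset (Fin n)) :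
    fourierHat f S = cubeInner f (chi S) := rfl

lemma sum_chi_mul_chi (x y : Fin n → Bool) :
    ∑ S : Finset (Fin n), chi S x * chi S y = if x = y then 2 ^ n else 0 := by
  have hprod : ∑ S : Finset (Fin n), chi S x * chi S y =
      ∏ i, (1 + (if x i then (-1 : ℝ) else 1) * (if y i then -1 else 1)) := by
    rw [prod_one_add, powerset_univ]
    exact sum_congr rfl fun S _ => (prod_mul_distrib).symm
  rw [hprod]
  split_ifs with hxy
  · subst hxy
    rw [show (2 : ℝ) ^ n = ∏ _i : Fin n, 2 by simp]
    exact prod_congr rfl fun i _ => by cases x i <;> norm_num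
  · obtain ⟨i, hi⟩ : ∃ i, x i ≠ y i := Function.ne_iff.mp hxy
    exact prod_eq_zero (mem_univ i) (by cases hx : x i <;> cases hy : y i <;> simp_all)

theorem sum_fourierHat_mul_fourierHat (f g : (Fin n → Bool) → ℝ) :
    ∑ S : Finset (Fin n), fourierHat f S * fourierHat g S = cubeInner f g := by
  have hdelta : ∀ x : Fin n → Bool,
      ∑ y, ∑ S : Finset (Fin n), f x * g y * (chi S x * chi S y) = f x * g x * 2 ^ n := by
    intro x
    simp_rw [← mul_sum, sum_chi_mul_chi, mul_ite, mul_zero, sum_ite_eq, if_pos (mem_univ x)]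
  calc ∑ S : Finset (Fin n), fourierHat f S * fourierHat g S
      = (∑ x, ∑ y, ∑ S : Finset (Fin n), f x * g y * (chi S x * chi S y)) /
          (2 ^ n * 2 ^ n) := by
        simp_rw [fourierHat, div_mul_div_comm, ← sum_div, sum_mul_sum]
        rw [sum_comm]
        refine congrArg (· / _) (sum_congr rfl fun x _ => ?_)
        rw [sum_comm]
        exact sum_congr rfl fun y _ => sum_congr rfl fun S _ => by ring
    _ = cubeInner f g := by
        simp_rw [hdelta, ← sum_mul, cubeInner]
        field_simp

lemma cubeInner_self_eq_sum_sq (g : (Fin n → Bool) → ℝ) :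
    cubeInner g g = ∑ S : Finset (Fin n), fourierHat g S ^ 2 := by
  simp_rw [← sum_fourierHat_mul_fourierHat, sq]

def flipCoord (x : Fin n → Bool) (i : Fin n) : Fin n → Bool := Function.update x i (!x i)

lemma flipCoord_eq_iff (x y : Fin n → Bool) (i : Fin n) :
    flipCoord x i = y ↔ ∀ j, x j ≠ y j ↔ j = i := by
  simp only [funext_iff, flipCoord, Function.update_apply]
  refine forall_congr' fun j => ?_
  split_ifs with h
  · subst h; cases x j <;> cases y j <;> simp
  · simp [h]

lemma hammingDist_eq_one_iff (x y : Fin n → Bool) :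
    hammingDist x y = 1 ↔ ∃ i, flipCoord x i = y := by
  simp only [hammingDist, card_eq_one, flipCoord_eq_iff, Finset.ext_iff, mem_filter, mem_univ,
    true_and, mem_singleton]

lemma flipCoord_injective (x : Fin n → Bool) : Function.Injective (flipCoord x) := by
  intro i j hij
  exact (((flipCoord_eq_iff x _ i).mp hij j).mp (by simp [flipCoord])).symm

lemma adjOp_eq_sum_flipCoord (f : (Fin n → Bool) → ℝ) (x : Fin n → Bool) :
    adjOp f x = ∑ i, f (flipCoord x i) := by
  have hnbrs : univ.filter (fun y => hammingDist x y = 1) = univ.image (flipCoord x) := by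
    ext y
    simp [hammingDist_eq_one_iff]
  rw [adjOp, hnbrs, sum_image fun i _ j _ h => flipCoord_injective x h]

lemma chi_flipCoord (S : Finset (Fin n)) (x : Fin n → Bool) (i : Fin n) :
    chi S (flipCoord x i) = (if i ∈ S then -1 else 1) * chi S x := by
  split_ifs with hi
  · rw [chi, chi, ← mul_prod_erase _ _ hi, ← mul_prod_erase _ _ hi,
      prod_congr rfl fun j hj => by rw [flipCoord, Function.update_of_ne (ne_of_mem_erase hj)]]
    cases hx : x i <;> simp [flipCoord, hx]
  · rw [one_mul]
    exact prod_congr rfl fun j hj => by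
      rw [flipCoord, Function.update_of_ne (ne_of_mem_of_not_mem hj hi)]

lemma sum_ite_mem_neg_one_one {ι : Type*} [Fintype ι] [DecidableEq ι] (S : Finset ι) :
    ∑ i, (if i ∈ S then (-1 : ℝ) else 1) = Fintype.card ι - 2 * #S := by
  have hsign : ∀ i, (if i ∈ S then (-1 : ℝ) else 1) = 1 - 2 * if i ∈ S then 1 else 0 :=
    fun i => by split_ifs <;> ring
  simp_rw [hsign, sum_sub_distrib, ← mul_sum, sum_boole, filter_mem_eq_inter, univ_inter]
  simp

lemma adjOp_chi (S : Finset (Fin n)) :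
    adjOp (chi S) = fun x => ((n : ℝ) - 2 * #S) * chi S x := by
  funext x
  simp_rw [adjOp_eq_sum_flipCoord, chi_flipCoord, ← sum_mul, sum_ite_mem_neg_one_one,
    Fintype.card_fin]

lemma cubeInner_adjOp_comm (f g : (Fin n → Bool) → ℝ) :
    cubeInner (adjOp f) g = cubeInner f (adjOp g) := by
  simp only [cubeInner, adjOp, sum_filter, sum_mul, mul_sum]
  rw [sum_comm]
  refine congrArg (· / _) (sum_congr rfl fun x _ => sum_congr rfl fun y _ => ?_)
  rw [hammingDist_comm]
  split_ifs <;> ring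

lemma fourierHat_adjOp (g : (Fin n → Bool) → ℝ) (S : Finset (Fin n)) :
    fourierHat (adjOp g) S = ((n : ℝ) - 2 * #S) * fourierHat g S := by
  rw [fourierHat_eq_cubeInner, cubeInner_adjOp_comm, adjOp_chi, fourierHat, cubeInner,
    ← mul_div_assoc, mul_sum]
  simp_rw [mul_left_comm]

theorem cubeInner_adjOp_self (g : (Fin n → Bool) → ℝ) :
    cubeInner (adjOp g) g = ∑ S : Finset (Fin n), ((n : ℝ) - 2 * #S) * fourierHat g S ^ 2 := by
  simp_rw [← sum_fourierHat_mul_fourierHat, fourierHat_adjOp, sq, mul_assoc]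

end BooleanCube

open BooleanCube

theorem rayleigh_upper_bound_general (n k : ℕ) (hkn : 2 * k ≤ n)
    (g : (Fin n → Bool) → ℝ)
    (hg0 : fourierHat g ∅ = 1)
    (hgS : ∀ S : Finset (Fin n), 1 ≤ S.card → S.card ≤ k - 1 → fourierHat g S = 0) :
    cubeInner (adjOp g) g ≤ (n : ℝ) + ((n : ℝ) - 2 * k) * cubeInner g g := by
  have hterm : ∀ S : Finset (Fin n), ((n : ℝ) - 2 * #S) * fourierHat g S ^ 2 ≤
      ((n : ℝ) - 2 * k) * fourierHat g S ^ 2 + if S = ∅ then (2 * k : ℝ) else 0 := by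
    intro S
    rcases S.eq_empty_or_nonempty with rfl | hS
    · simp [hg0]
    by_cases hlow : #S ≤ k - 1
    · simp [hgS S hS.card_pos hlow, hS.ne_empty]
    · have : (k : ℝ) ≤ #S := by exact_mod_cast (show k ≤ #S by omega)
      rw [if_neg hS.ne_empty, add_zero]
      exact mul_le_mul_of_nonneg_right (by linarith) (sq_nonneg _)
  have hkn' : (2 * k : ℝ) ≤ n := by exact_mod_cast hkn
  calc cubeInner (adjOp g) g
      = ∑ S : Finset (Fin n), ((n : ℝ) - 2 * #S) * fourierHat g S ^ 2 := cubeInner_adjOp_self g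
    _ ≤ ∑ S : Finset (Fin n),
          (((n : ℝ) - 2 * k) * fourierHat g S ^ 2 + if S = ∅ then (2 * k : ℝ) else 0) :=
        sum_le_sum fun S _ => hterm S
    _ = ((n : ℝ) - 2 * k) * cubeInner g g + 2 * k := by
        rw [sum_add_distrib, ← mul_sum, sum_ite_eq', if_pos (mem_univ _),
          cubeInner_self_eq_sum_sq]
    _ ≤ (n : ℝ) + ((n : ℝ) - 2 * k) * cubeInner g g := by linarith

/-- If `2k ≤ n`, `ĝ(∅) = 1` and `ĝ(S) = 0` for all `1 ≤ |S| ≤ k − 1`, then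
`⟨Ag, g⟩ ≤ n + (n − 2k)·E[g²]`. -/
theorem rayleigh_upper_bound (n k : ℕ) (hn : 0 < n) (hk : 0 < k) (hkn : 2 * k ≤ n)
    (g : (Fin n → Bool) → ℝ)
    (hg0 : fourierHat g ∅ = 1)
    (hgS : ∀ S : Finset (Fin n), 1 ≤ S.card → S.card ≤ k - 1 → fourierHat g S = 0) :
    cubeInner (adjOp g) g ≤ (n : ℝ) + ((n : ℝ) - 2 * k) * cubeInner g g :=
  rayleigh_upper_bound_general n k hkn g hg0 hgS
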